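/- Let G be a consensus game with n players in which all players adopt the common tie-breaking rule preferring R over L. Then for every k ∈ {1,…,n} and every order of the players, every k-lookahead outcome of G under this tie-breaking rule equals (R,…,R); in particular, every such k-lookahead outcome has all players playing the same action and has minimum (namely zero) social cost. -/

import Mathlib

/-- A sequential binary-action game (used for consensus games): `w i j` is the weight of
the edge between players `i` and `j`, and `base i b` is the cost player `i` additionally
incurs when playing `b` against the already-fixed actions of earlier players.
Actions are `Bool`, with `true` standing for `R` and `false` for `L`. -/
structure CSGame (n : ℕ) where
  w : Fin n → Fin n → ℝ
  base : Fin n → Bool → ℝ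

namespace CSGame

variable {n : ℕ}

/-- Cost of player `i` in profile `A`. -/
def cost (G : CSGame n) (A : Fin n → Bool) (i : Fin n) : ℝ :=
  G.base i (A i) + ∑ j, if A i ≠ A j then G.w i j else 0

/-- The subgame induced by the first player playing `a`. -/
def subgame (G : CSGame (n + 1)) (a : Bool) : CSGame n where
  w := fun i j => G.w i.succ j.succ
  base := fun i b => G.base i.succ b + (if b ≠ a then G.w i.succ 0 else 0)

/-- `G^k`: the game on the first `min k n` players. -/
def truncate (G : CSGame n) (k : ℕ) : CSGame (min k n) where
  w := fun i j =>
    G.w (Fin.castLE (min_le_right k n) i) (Fin.castLE (min_le_right k n) j)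
  base := fun i b => G.base (Fin.castLE (min_le_right k n) i) b

/-- The game reordered so that the player in position `i` is player `σ i`. -/
def reorder (G : CSGame n) (σ : Equiv.Perm (Fin n)) : CSGame n where
  w := fun i j => G.w (σ i) (σ j)
  base := fun i b => G.base (σ i) b

/-- Subgame-perfect outcomes with respect to the order `1,…,n`, under the common
tie-breaking rule preferring `R` (i.e. `true`): playing `L` is only allowed when it is
strictly better than playing `R`. -/
def IsSPO : {n : ℕ} → CSGame n → (Fin n → Bool) → Prop
  | 0, _, _ => True
  | _ + 1, G, A =>
      ∃ f : Bool → (Fin _ → Bool),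
        (∀ a, IsSPO (G.subgame a) (f a)) ∧
        f (A 0) = Fin.tail A ∧
        (∀ a, G.cost (Fin.cons (A 0) (f (A 0))) 0 ≤ G.cost (Fin.cons a (f a)) 0) ∧
        (A 0 = false →
          G.cost (Fin.cons false (f false)) 0 < G.cost (Fin.cons true (f true)) 0)

/-- `k`-lookahead outcomes with respect to the order `1,…,n`, under the common
tie-breaking rule preferring `R`. -/
def IsKLA (k : ℕ) : {n : ℕ} → CSGame n → (Fin n → Bool) → Prop
  | 0, _, _ => True
  | n + 1, G, A =>
      (∃ (hk : 0 < min k (n + 1)) (B : Fin (min k (n + 1)) → Bool),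
          IsSPO (G.truncate k) B ∧ B ⟨0, hk⟩ = A 0) ∧
      IsKLA k (G.subgame (A 0)) (Fin.tail A)

/-- `A` is a `k`-lookahead outcome of `G` with respect to some order of the players. -/
def IsKLO (k : ℕ) (G : CSGame n) (A : Fin n → Bool) : Prop :=
  ∃ σ : Equiv.Perm (Fin n), IsKLA k (G.reorder σ) (A ∘ σ)

end CSGame

/-- The consensus game on a weighted graph `w` (symmetric, nonnegative weights; absent
edges have weight `0`): no base costs. -/
def consensusGame (n : ℕ) (w : Fin n → Fin n → ℝ) : CSGame n where
  w := w
  base := fun _ _ => 0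

/-!
A consensus game, and every game obtained from it by letting the first player play `R`,
truncating or reordering, has nonnegative costs, and its all-`R` profile costs every player
nothing. By induction, every subgame-perfect outcome is then all-`R`: after `R` the rest of the
play is all-`R` and gives the first player cost `0`, so `L` is never strictly better. Hence every
`k`-lookahead step picks `R`, and the all-`R` profile has social cost `0`, the least possible.
-/

theorem Fin.cons_const {α : Type*} {n : ℕ} (a : α) :
    (Fin.cons a fun _ => a : Fin (n + 1) → α) = fun _ => a :=
  funext (Fin.cases rfl fun _ => rfl)

namespace CSGame

variable {n : ℕ}

structure IsRFavoring (G : CSGame n) : Prop where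
  w_nonneg : ∀ i j, 0 ≤ G.w i j
  base_true : ∀ i, G.base i true = 0
  base_nonneg : ∀ i b, 0 ≤ G.base i b

namespace IsRFavoring

variable {G : CSGame n}

theorem cost_nonneg (hG : G.IsRFavoring) (A : Fin n → Bool) (i : Fin n) :
    0 ≤ G.cost A i :=
  add_nonneg (hG.base_nonneg i (A i)) <| Finset.sum_nonneg fun j _ => by
    split_ifs
    exacts [hG.w_nonneg i j, le_rfl]

theorem cost_const_true (hG : G.IsRFavoring) (i : Fin n) : G.cost (fun _ => true) i = 0 := by
  simp [cost, hG.base_true]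

theorem subgame_true {G : CSGame (n + 1)} (hG : G.IsRFavoring) :
    (G.subgame true).IsRFavoring where
  w_nonneg _ _ := hG.w_nonneg _ _
  base_true _ := by simp [subgame, hG.base_true]
  base_nonneg _ _ := add_nonneg (hG.base_nonneg _ _) <| by
    split_ifs
    exacts [hG.w_nonneg _ _, le_rfl]

theorem truncate (hG : G.IsRFavoring) (k : ℕ) : (G.truncate k).IsRFavoring :=
  ⟨fun _ _ => hG.w_nonneg _ _, fun _ => hG.base_true _, fun _ _ => hG.base_nonneg _ _⟩

theorem reorder (hG : G.IsRFavoring) (σ : Equiv.Perm (Fin n)) : (G.reorder σ).IsRFavoring :=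
  ⟨fun _ _ => hG.w_nonneg _ _, fun _ => hG.base_true _, fun _ _ => hG.base_nonneg _ _⟩

theorem eq_const_true_of_isSPO {A : Fin n → Bool} (hG : G.IsRFavoring) (hA : G.IsSPO A) :
    A = fun _ => true := by
  induction n with
  | zero => exact Subsingleton.elim _ _
  | succ n ih =>
    obtain ⟨f, hf, hf_tail, -, htie⟩ := hA
    have hf_true : f true = fun _ => true := ih hG.subgame_true (hf true)
    have hA0 : A 0 = true := by
      by_contra hA0
      have hlt := htie (Bool.eq_false_iff.mpr hA0)
      rw [hf_true, Fin.cons_const, hG.cost_const_true] at hlt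
      exact (hG.cost_nonneg _ 0).not_gt hlt
    rw [← Fin.cons_self_tail A, ← hf_tail, hA0, hf_true, Fin.cons_const]

theorem eq_const_true_of_isKLA {k : ℕ} {A : Fin n → Bool} (hG : G.IsRFavoring)
    (hA : G.IsKLA k A) : A = fun _ => true := by
  induction n with
  | zero => exact Subsingleton.elim _ _
  | succ n ih =>
    obtain ⟨⟨_, B, hB, hBA⟩, htail⟩ := hA
    have hA0 : A 0 = true := by rw [← hBA, (hG.truncate k).eq_const_true_of_isSPO hB]
    rw [hA0] at htail
    rw [← Fin.cons_self_tail A, hA0, ih hG.subgame_true htail, Fin.cons_const]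

theorem eq_const_true_of_isKLO {k : ℕ} {A : Fin n → Bool} (hG : G.IsRFavoring)
    (hA : G.IsKLO k A) : A = fun _ => true := by
  obtain ⟨σ, hσ⟩ := hA
  have h := (hG.reorder σ).eq_const_true_of_isKLA hσ
  funext i
  simpa using congrFun h (σ.symm i)

end IsRFavoring

end CSGame

theorem consensusGame_isRFavoring {n : ℕ} {w : Fin n → Fin n → ℝ} (hw : ∀ i j, 0 ≤ w i j) :
    (consensusGame n w).IsRFavoring :=
  ⟨hw, fun _ => rfl, fun _ _ => le_rfl⟩

theorem consensus_klookahead_optimal_general (n : ℕ) (w : Fin n → Fin n → ℝ)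
    (hnonneg : ∀ i j, 0 ≤ w i j) (k : ℕ)
    (A : Fin n → Bool) (hA : CSGame.IsKLO k (consensusGame n w) A) :
    A = (fun _ => true) ∧
    (∑ i, CSGame.cost (consensusGame n w) A i = 0) ∧
    (∀ B : Fin n → Bool,
      ∑ i, CSGame.cost (consensusGame n w) A i ≤
        ∑ i, CSGame.cost (consensusGame n w) B i) := by
  have hG := consensusGame_isRFavoring hnonneg
  have hA_true : A = fun _ => true := hG.eq_const_true_of_isKLO hA
  have hSC : ∑ i, (consensusGame n w).cost A i = 0 := by
    simp only [hA_true, hG.cost_const_true, Finset.sum_const_zero]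
  refine ⟨hA_true, hSC, fun B => ?_⟩
  rw [hSC]
  exact Finset.sum_nonneg fun i _ => hG.cost_nonneg B i

/-- In a consensus game where all players adopt the common
tie-breaking rule preferring `R` (`true`), every `k`-lookahead outcome (for any
`k ∈ {1,…,n}` and any order of the players) equals `(R,…,R)`; in particular all players
play the same action and the social cost is minimal, namely zero. -/
theorem consensus_klookahead_optimal (n : ℕ) (w : Fin n → Fin n → ℝ)
    (hsym : ∀ i j, w i j = w j i) (hnonneg : ∀ i j, 0 ≤ w i j)
    (k : ℕ) (hk1 : 1 ≤ k) (hkn : k ≤ n)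
    (A : Fin n → Bool) (hA : CSGame.IsKLO k (consensusGame n w) A) :
    A = (fun _ => true) ∧
    (∑ i, CSGame.cost (consensusGame n w) A i = 0) ∧
    (∀ B : Fin n → Bool,
      ∑ i, CSGame.cost (consensusGame n w) A i ≤
        ∑ i, CSGame.cost (consensusGame n w) B i) :=
  consensus_klookahead_optimal_general n w hnonneg k A hA
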